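/- Let K be a compact convex set, F ⊂ K a closed face, φ: K → F affine continuous with φ|F = id, P(a) = a∘φ, and J = ker(P) = {a ∈ A(K): a|F = 0}. Then for every order unit space E with order unit e and every bounded linear order-preserving map T: E → A(K)/J with T(e) = π(1), the map T' = Φ∘T (where Φ(π(a)) = P(a)) is an order-preserving, norm-preserving lift of T, i.e. π∘T' = T and ‖T'‖ = ‖T‖. -/

import Mathlib

noncomputable instance normCLMQuotient {Z W : Type*} [NormedAddCommGroup Z] [NormedSpace ℝ Z]
    [NormedAddCommGroup W] [NormedSpace ℝ W] (J : Submodule ℝ W) :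
    Norm (Z →L[ℝ] W ⧸ J) := ContinuousLinearMap.hasOpNorm

variable {E : Type*} [AddCommGroup E] [Module ℝ E] [TopologicalSpace E]

/-- The space of affine continuous `W`-valued functions on a set `K ⊆ E`. -/
def affineFns (K : Set E) (W : Type*) [AddCommGroup W] [Module ℝ W] [TopologicalSpace W]
    [IsTopologicalAddGroup W] [ContinuousConstSMul ℝ W] : Submodule ℝ C(K, W) where
  carrier := {f | ∀ (x y : K) (t : ℝ), t ∈ Set.Icc (0:ℝ) 1 →
    ∀ (h : t • (x : E) + (1 - t) • (y : E) ∈ K), f ⟨_, h⟩ = t • f x + (1 - t) • f y}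
  add_mem' := by
    intro f g hf hg x y t ht h
    simp only [ContinuousMap.add_apply, hf x y t ht h, hg x y t ht h, smul_add]
    abel
  zero_mem' := by intro x y t ht h; simp
  smul_mem' := by
    intro c f hf x y t ht h
    simp only [ContinuousMap.smul_apply, hf x y t ht h, smul_add, smul_comm c t, smul_comm c (1-t)]

/-- `F` is a face of the convex set `K`. -/
def IsFaceOf (K F : Set E) : Prop :=
  F ⊆ K ∧ Convex ℝ F ∧ ∀ x ∈ K, ∀ y ∈ K, ∀ t : ℝ, 0 < t → t < 1 →
    t • x + (1 - t) • y ∈ F → x ∈ F ∧ y ∈ F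

/-- The subspace of those affine continuous functions vanishing on `F`. -/
def vanishingOn {K : Set E} {W : Type*} [AddCommGroup W] [Module ℝ W] [TopologicalSpace W]
    [IsTopologicalAddGroup W] [ContinuousConstSMul ℝ W]
    (A : Submodule ℝ C(K, W)) (F : Set E) : Submodule ℝ A where
  carrier := {a | ∀ x : K, (x : E) ∈ F → (a : C(K, W)) x = 0}
  add_mem' := by intro f g hf hg x hx; simp [hf x hx, hg x hx]
  zero_mem' := by intro x hx; simp
  smul_mem' := by intro c f hf x hx; simp [hf x hx]

/-- The data making an ordered normed space into an order unit space: a distinguished order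
unit, compatibility of order with the linear structure, and the norm being the order unit
norm. -/
structure OrderUnitSpaceData (V : Type*) [NormedAddCommGroup V] [NormedSpace ℝ V]
    [PartialOrder V] where
  unit : V
  add_le_add : ∀ x y z : V, x ≤ y → x + z ≤ y + z
  smul_nonneg : ∀ (c : ℝ) (x : V), 0 ≤ c → 0 ≤ x → 0 ≤ c • x
  unit_order_unit : ∀ x : V, ∃ r : ℝ, 0 < r ∧ -(r • unit) ≤ x ∧ x ≤ r • unit
  norm_eq : ∀ x : V, ‖x‖ = sInf {r : ℝ | -(r • unit) ≤ x ∧ x ≤ r • unit}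

noncomputable instance affineFnsNormedAddCommGroup (K : Set E) [CompactSpace K] :
    NormedAddCommGroup (affineFns K ℝ) := Submodule.normedAddCommGroup _

noncomputable instance affineFnsNormedSpace (K : Set E) [CompactSpace K] :
    NormedSpace ℝ (affineFns K ℝ) := Submodule.normedSpace _


/-!
Because `φ` is an affine retraction of `K` onto `F`, the operator `P a = a ∘ φ` is a positive
contraction of `A(K)` which kills `J` and agrees with `a` on `F`, i.e. `P a - a ∈ J`. Hence `P`
factors through a contraction `Φ : A(K)/J → A(K)` which is a section of `π`. The map `Φ ∘ T`
then lifts `T`, is positive because `P` is, and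
`‖T‖ = ‖π ∘ Φ ∘ T‖ ≤ ‖Φ ∘ T‖ ≤ ‖Φ‖ ‖T‖ ≤ ‖T‖`.
-/

namespace Submodule

variable {Z W V : Type*} [SeminormedAddCommGroup Z] [NormedSpace ℝ Z]
  [SeminormedAddCommGroup W] [NormedSpace ℝ W] [SeminormedAddCommGroup V] [NormedSpace ℝ V]
  {J : Submodule ℝ W}

theorem norm_liftQ_apply_le {P : W →ₗ[ℝ] V} (hJ : J ≤ LinearMap.ker P)
    (hP : ∀ a, ‖P a‖ ≤ ‖a‖) (q : W ⧸ J) : ‖J.liftQ P hJ q‖ ≤ ‖q‖ := by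
  refine le_of_forall_pos_le_add fun ε hε => ?_
  obtain ⟨a, rfl, ha⟩ := Quotient.norm_mk_lt q hε
  exact (hP a).trans ha.le

noncomputable def liftQCLM {P : W →ₗ[ℝ] V} (hJ : J ≤ LinearMap.ker P)
    (hP : ∀ a, ‖P a‖ ≤ ‖a‖) : W ⧸ J →L[ℝ] V :=
  (J.liftQ P hJ).mkContinuous 1 fun q => by
    simpa only [one_mul] using norm_liftQ_apply_le hJ hP q

@[simp]
theorem liftQCLM_mk {P : W →ₗ[ℝ] V} (hJ : J ≤ LinearMap.ker P) (hP : ∀ a, ‖P a‖ ≤ ‖a‖)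
    (a : W) : liftQCLM hJ hP (Quotient.mk a) = P a := rfl

theorem opNorm_liftQCLM_le {P : W →ₗ[ℝ] V} (hJ : J ≤ LinearMap.ker P)
    (hP : ∀ a, ‖P a‖ ≤ ‖a‖) : ‖liftQCLM hJ hP‖ ≤ 1 :=
  LinearMap.mkContinuous_norm_le _ zero_le_one _

variable {P : W →ₗ[ℝ] W} (hJ : J ≤ LinearMap.ker P) (hP : ∀ a, ‖P a‖ ≤ ‖a‖)

theorem mk_liftQCLM (hPJ : ∀ a, P a - a ∈ J) (q : W ⧸ J) : Quotient.mk (liftQCLM hJ hP q) = q := by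
  obtain ⟨a, rfl⟩ := Quotient.mk_surjective J q
  exact (Quotient.eq J).2 (hPJ a)

theorem opNorm_liftQCLM_comp (hPJ : ∀ a, P a - a ∈ J) (T : Z →L[ℝ] W ⧸ J) :
    ‖(liftQCLM hJ hP).comp T‖ = ‖T‖ := by
  refine le_antisymm ?_ (T.opNorm_le_bound (norm_nonneg _) fun z => ?_)
  · calc ‖(liftQCLM hJ hP).comp T‖ ≤ ‖liftQCLM hJ hP‖ * ‖T‖ := (liftQCLM hJ hP).opNorm_comp_le T
      _ ≤ ‖T‖ := mul_le_of_le_one_left T.opNorm_nonneg (opNorm_liftQCLM_le hJ hP)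
  · calc ‖T z‖ = ‖(Quotient.mk (liftQCLM hJ hP (T z)) : W ⧸ J)‖ := by
          rw [mk_liftQCLM hJ hP hPJ]
      _ ≤ ‖(liftQCLM hJ hP).comp T z‖ := Quotient.norm_mk_le _ _
      _ ≤ ‖(liftQCLM hJ hP).comp T‖ * ‖z‖ := ContinuousLinearMap.le_opNorm _ z

end Submodule

section AffineFns

variable {K : Set E}

def IsAffineSelfMap (K : Set E) (φ : K → K) : Prop :=
  ∀ (x y : K) (t : ℝ), t ∈ Set.Icc (0:ℝ) 1 → ∀ (h : t • (x : E) + (1 - t) • (y : E) ∈ K),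
    (φ ⟨_, h⟩ : E) = t • (φ x : E) + (1 - t) • (φ y : E)

variable {W : Type*} [AddCommGroup W] [Module ℝ W] [TopologicalSpace W]
  [IsTopologicalAddGroup W] [ContinuousConstSMul ℝ W] {φ : K → K}

theorem comp_mem_affineFns (hK : Convex ℝ K) (hφc : Continuous φ) (hφa : IsAffineSelfMap K φ)
    {a : C(K, W)} (ha : a ∈ affineFns K W) : a.comp ⟨φ, hφc⟩ ∈ affineFns K W := by
  intro x y t ht h
  have hmem : t • ((φ x : K) : E) + (1 - t) • ((φ y : K) : E) ∈ K :=
    hK (φ x).2 (φ y).2 ht.1 (by linarith [ht.2]) (by ring)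
  have hφxy : φ ⟨_, h⟩ = ⟨_, hmem⟩ := Subtype.ext (hφa x y t ht h)
  simpa [hφxy] using ha (φ x) (φ y) t ht hmem

variable (hK : Convex ℝ K) (hφc : Continuous φ) (hφa : IsAffineSelfMap K φ)

def affineFns.precomp : affineFns K W →ₗ[ℝ] affineFns K W where
  toFun a := ⟨(a : C(K, W)).comp ⟨φ, hφc⟩, comp_mem_affineFns hK hφc hφa a.2⟩
  map_add' _ _ := rfl
  map_smul' _ _ := rfl

@[simp]
theorem affineFns.precomp_apply (a : affineFns K W) (x : K) :
    (affineFns.precomp hK hφc hφa a : C(K, W)) x = (a : C(K, W)) (φ x) := rfl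

theorem vanishingOn_le_ker_precomp {F : Set E} (hφF : ∀ x, (φ x : E) ∈ F) :
    vanishingOn (affineFns K W) F ≤ LinearMap.ker (affineFns.precomp hK hφc hφa) :=
  fun _ ha => Subtype.ext <| ContinuousMap.ext fun x => ha (φ x) (hφF x)

theorem precomp_sub_mem_vanishingOn {F : Set E} (hφid : ∀ x : K, (x : E) ∈ F → φ x = x)
    (a : affineFns K W) :
    affineFns.precomp hK hφc hφa a - a ∈ vanishingOn (affineFns K W) F := by
  intro x hx
  change (affineFns.precomp hK hφc hφa a : C(K, W)) x - (a : C(K, W)) x = 0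
  rw [affineFns.precomp_apply, hφid x hx, sub_self]

theorem affineFns.norm_precomp_le [CompactSpace K] (a : affineFns K ℝ) :
    ‖affineFns.precomp hK hφc hφa a‖ ≤ ‖a‖ :=
  (ContinuousMap.norm_le _ (norm_nonneg _)).2 fun x => (a : C(K, ℝ)).norm_coe_le_norm (φ x)

theorem affineFns.precomp_nonneg {a : affineFns K ℝ} (ha : 0 ≤ (a : C(K, ℝ))) :
    0 ≤ (affineFns.precomp hK hφc hφa a : C(K, ℝ)) :=
  fun x => ha (φ x)

end AffineFns

theorem stmt_14_general
    (K F : Set E) [CompactSpace K] (hKconv : Convex ℝ K)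
    (φ : K → K) (hφcont : Continuous φ) (hφF : ∀ x : K, (φ x : E) ∈ F)
    (hφaff : ∀ (x y : K) (t : ℝ), t ∈ Set.Icc (0:ℝ) 1 →
      ∀ (h : t • (x : E) + (1 - t) • (y : E) ∈ K),
        (φ ⟨_, h⟩ : E) = t • (φ x : E) + (1 - t) • (φ y : E))
    (hφid : ∀ x : K, (x : E) ∈ F → φ x = x)
    (E' : Type*) [NormedAddCommGroup E'] [NormedSpace ℝ E'] [PartialOrder E']
    (T : E' →L[ℝ] (affineFns K ℝ ⧸ vanishingOn (affineFns K ℝ) F))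
    (hTmono : ∀ z w : E', z ≤ w → ∃ a : affineFns K ℝ,
      (0 : C(K, ℝ)) ≤ (a : C(K, ℝ)) ∧ Submodule.Quotient.mk a = T w - T z) :
    ∃ T' : E' →L[ℝ] affineFns K ℝ,
      (∀ (z : E') (a : affineFns K ℝ), Submodule.Quotient.mk a = T z →
        ∀ x : K, ((T' z : C(K, ℝ)) x) = (a : C(K, ℝ)) (φ x)) ∧
      (∀ z : E',
        (Submodule.Quotient.mk (T' z) : affineFns K ℝ ⧸ vanishingOn (affineFns K ℝ) F) = T z) ∧
      ‖T'‖ = ‖T‖ ∧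
      (∀ z w : E', z ≤ w → (T' z : C(K, ℝ)) ≤ (T' w : C(K, ℝ))) := by
  set P := affineFns.precomp (W := ℝ) hKconv hφcont hφaff
  have hJ := vanishingOn_le_ker_precomp (W := ℝ) hKconv hφcont hφaff hφF
  have hP := affineFns.norm_precomp_le hKconv hφcont hφaff
  have hPJ := precomp_sub_mem_vanishingOn (W := ℝ) hKconv hφcont hφaff hφid
  set Φ := Submodule.liftQCLM hJ hP
  refine ⟨Φ.comp T, fun z a ha x => ?_, fun z => Submodule.mk_liftQCLM hJ hP hPJ (T z),
    Submodule.opNorm_liftQCLM_comp hJ hP hPJ T, fun z w hzw => ?_⟩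
  · rw [ContinuousLinearMap.comp_apply, ← ha]
    rfl
  · obtain ⟨a, ha0, ha⟩ := hTmono z w hzw
    have hdiff : Φ (T w) - Φ (T z) = P a := by
      rw [← map_sub, ← ha, Submodule.liftQCLM_mk]
    rw [← sub_nonneg]
    simpa only [ContinuousLinearMap.comp_apply, ← Submodule.coe_sub, hdiff]
      using affineFns.precomp_nonneg hKconv hφcont hφaff ha0

/-- With φ : K → F affine continuous, identity on F, P(a) = a∘φ and
J = ker P = {a ∈ A(K) : a|F = 0}: for every order unit space E' with order unit e and every
bounded linear order-preserving T : E' → A(K)/J with T(e) = π(1), the map T' = Φ∘T (where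
Φ(π(a)) = P(a)) is an order-preserving, norm-preserving lift of T: π∘T' = T and ‖T'‖ = ‖T‖. -/
theorem stmt_14 [IsTopologicalAddGroup E] [ContinuousSMul ℝ E] [LocallyConvexSpace ℝ E]
    (K F : Set E) (hK : IsCompact K) [CompactSpace K] (hKconv : Convex ℝ K)
    (hF : IsFaceOf K F) (hFclosed : IsClosed F)
    (φ : K → K) (hφcont : Continuous φ) (hφF : ∀ x : K, (φ x : E) ∈ F)
    (hφaff : ∀ (x y : K) (t : ℝ), t ∈ Set.Icc (0:ℝ) 1 →
      ∀ (h : t • (x : E) + (1 - t) • (y : E) ∈ K),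
        (φ ⟨_, h⟩ : E) = t • (φ x : E) + (1 - t) • (φ y : E))
    (hφid : ∀ x : K, (x : E) ∈ F → φ x = x)
    (E' : Type*) [NormedAddCommGroup E'] [NormedSpace ℝ E'] [PartialOrder E']
    (d : OrderUnitSpaceData E')
    (T : E' →L[ℝ] (affineFns K ℝ ⧸ vanishingOn (affineFns K ℝ) F))
    (hTmono : ∀ z w : E', z ≤ w → ∃ a : affineFns K ℝ,
      (0 : C(K, ℝ)) ≤ (a : C(K, ℝ)) ∧ Submodule.Quotient.mk a = T w - T z)
    (hTunit : ∃ a : affineFns K ℝ, (∀ x : K, (a : C(K, ℝ)) x = 1) ∧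
      Submodule.Quotient.mk a = T d.unit) :
    ∃ T' : E' →L[ℝ] affineFns K ℝ,
      (∀ (z : E') (a : affineFns K ℝ), Submodule.Quotient.mk a = T z →
        ∀ x : K, ((T' z : C(K, ℝ)) x) = (a : C(K, ℝ)) (φ x)) ∧
      (∀ z : E',
        (Submodule.Quotient.mk (T' z) : affineFns K ℝ ⧸ vanishingOn (affineFns K ℝ) F) = T z) ∧
      ‖T'‖ = ‖T‖ ∧
      (∀ z w : E', z ≤ w → (T' z : C(K, ℝ)) ≤ (T' w : C(K, ℝ))) :=
  stmt_14_general K F hKconv φ hφcont hφF hφaff hφid E' T hTmono
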